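/- A composition γ with α ⪯ γ ⪯ β is uniquely determined by the choice, for each j with ξ_{α,β}(j) = j, of a value ξ_{γ,β}(j) ∈ {0, j}; moreover every such choice is realized by some γ. In other words, the map γ ↦ (ξ_{γ,β}(j))_{j: ξ_{α,β}(j)=j} is a bijection from {γ : α ⪯ γ ⪯ β} to ∏_{j: ξ_{α,β}(j)=j} {0, j}. -/
import Mathlib


/-- The set of proper partial sums of a composition. -/
def csub {n : ℕ} (α : Composition n) : Finset ℕ :=
  (Finset.Ico 1 α.length).image α.sizeUpTo


lemma mem_csub_iff {n : ℕ} (γ : Composition n) {x : ℕ} (h1 : 0 < x) (h2 : x < n) :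
    x ∈ csub γ ↔ ∃ i : Fin (γ.length + 1), γ.sizeUpTo i = x := by
  constructor
  · intro hx
    simp only [csub, Finset.mem_image, Finset.mem_Ico] at hx
    obtain ⟨j, ⟨hj1, hj2⟩, hj3⟩ := hx
    exact ⟨⟨j, by omega⟩, hj3⟩
  · rintro ⟨i, hi⟩
    have hi0 : (i : ℕ) ≠ 0 := by
      rintro hz
      rw [hz] at hi
      rw [Composition.sizeUpTo_zero] at hi
      omega
    have hil : (i : ℕ) < γ.length := by
      by_contra hh
      push_neg at hh
      have := γ.sizeUpTo_ofLength_le i hh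
      omega
    simp only [csub, Finset.mem_image, Finset.mem_Ico]
    exact ⟨i, ⟨by omega, hil⟩, hi⟩

lemma mem_boundaries_iff {n : ℕ} (γ : Composition n) (j : Fin (n + 1)) :
    j ∈ γ.boundaries ↔ ∃ i : Fin (γ.length + 1), γ.sizeUpTo i = j.1 := by
  simp [Composition.boundaries, Composition.boundary, Fin.ext_iff,
    OrderEmbedding.ofStrictMono]

lemma csub_subset_Ico {n : ℕ} (γ : Composition n) : csub γ ⊆ Finset.Ico 1 n := by
  intro x hx
  simp only [csub, Finset.mem_image, Finset.mem_Ico] at hx ⊢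
  obtain ⟨j, ⟨h1, h2⟩, rfl⟩ := hx
  constructor
  · have h0 : 0 < γ.sizeUpTo 1 := by
      have := γ.sizeUpTo_strict_mono (show 0 < γ.length by omega)
      simpa [γ.sizeUpTo_zero] using this
    have := γ.monotone_sizeUpTo h1
    omega
  · have := γ.sizeUpTo_strict_mono h2
    have := γ.monotone_sizeUpTo (show j + 1 ≤ γ.length from h2)
    have := γ.sizeUpTo_length
    omega

lemma sizeUpTo_inj {n : ℕ} (γ : Composition n) {i j : ℕ} (hi : i ≤ γ.length)
    (hj : j ≤ γ.length) (h : γ.sizeUpTo i = γ.sizeUpTo j) : i = j := by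
  rcases lt_trichotomy i j with hlt | he | hlt
  · have h1 := γ.sizeUpTo_strict_mono (show i < γ.length by omega)
    have h2 := γ.monotone_sizeUpTo (show i + 1 ≤ j from hlt)
    omega
  · exact he
  · have h1 := γ.sizeUpTo_strict_mono (show j < γ.length by omega)
    have h2 := γ.monotone_sizeUpTo (show j + 1 ≤ i from hlt)
    omega

lemma csub_injective {n : ℕ} : Function.Injective (csub : Composition n → Finset ℕ) := by
  intro γ γ' hcs
  have hb : γ.boundaries = γ'.boundaries := by
    ext j
    by_cases h0 : j = 0
    · subst h0
      exact iff_of_true γ.toCompositionAsSet.zero_mem γ'.toCompositionAsSet.zero_mem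
    by_cases hl : j = Fin.last n
    · subst hl
      exact iff_of_true γ.toCompositionAsSet.getLast_mem γ'.toCompositionAsSet.getLast_mem
    have h1 : 0 < j.1 := Nat.pos_of_ne_zero (fun hh => h0 (Fin.ext hh))
    have h2 : j.1 < n := by
      have := j.2
      have : j.1 ≠ n := fun hh => hl (Fin.ext hh)
      omega
    rw [mem_boundaries_iff, mem_boundaries_iff, ← mem_csub_iff γ h1 h2,
      ← mem_csub_iff γ' h1 h2, hcs]
  exact (compositionEquiv n).injective (by ext1; exact hb)

lemma csub_surjective {n : ℕ} (S : Finset ℕ) (hS : S ⊆ Finset.Ico 1 n) :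
    ∃ γ : Composition n, csub γ = S := by
  have hmem : ∀ x ∈ S, x < n + 1 := fun x hx => by
    have := hS hx; simp only [Finset.mem_Ico] at this; omega
  set B : Finset (Fin (n + 1)) := insert 0 (insert (Fin.last n)
    (S.attach.image (fun x => (⟨x.1, hmem x.1 x.2⟩ : Fin (n + 1))))) with hB
  refine ⟨(⟨B, by simp [hB], by simp [hB]⟩ : CompositionAsSet n).toComposition, ?_⟩
  ext x
  by_cases hx : x ∈ Finset.Ico 1 n
  · simp only [Finset.mem_Ico] at hx
    obtain ⟨h1, h2⟩ := hx
    rw [mem_csub_iff _ h1 h2, ← mem_boundaries_iff _ ⟨x, by omega⟩,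
      CompositionAsSet.toComposition_boundaries]
    simp only [hB, Finset.mem_insert, Finset.mem_image, Finset.mem_attach]
    constructor
    · rintro (h | h | ⟨y, -, hy⟩)
      · exfalso
        have := congrArg Fin.val h
        simp at this
        omega
      · exfalso
        have := congrArg Fin.val h
        simp [Fin.last] at this
        omega
      · have := congrArg Fin.val hy
        simp at this
        subst this
        exact y.2
    · intro hxS
      exact Or.inr (Or.inr ⟨⟨x, hxS⟩, trivial, rfl⟩)
  · constructor
    · intro h; exact absurd (csub_subset_Ico _ h) hx
    · intro h; exact absurd (hS h) hx

/-- `ξ_{γ,β}(j)`: equals `j` if the parts `β_j` and `β_{j+1}` arise from the same part of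
`γ` (i.e. the `j`-th partial sum of `β` is not a boundary of `γ`), and `0` otherwise. -/
def xi {n : ℕ} (γ β : Composition n) (j : ℕ) : ℕ :=
  if β.sizeUpTo j ∈ csub γ then 0 else j

/-- A composition `γ` with `α ⪯ γ ⪯ β` is uniquely determined by the values
`ξ_{γ,β}(j) ∈ {0,j}` for those `j` with `ξ_{α,β}(j) = j`, and every choice is realized:
the map `γ ↦ (ξ_{γ,β}(j))_j` is a bijection onto `∏_{j: ξ_{α,β}(j)=j} {0,j}`. -/
theorem interval_bijection (n : ℕ) (α β : Composition n) (h : csub α ⊆ csub β) :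
    Function.Injective
      (fun (γ : {γ : Composition n // csub α ⊆ csub γ ∧ csub γ ⊆ csub β})
        (j : {j : ℕ // j ∈ (Finset.Ico 1 β.length).filter
            (fun j => β.sizeUpTo j ∉ csub α)}) => xi γ.1 β j.1) ∧
    Set.range
      (fun (γ : {γ : Composition n // csub α ⊆ csub γ ∧ csub γ ⊆ csub β})
        (j : {j : ℕ // j ∈ (Finset.Ico 1 β.length).filter
            (fun j => β.sizeUpTo j ∉ csub α)}) => xi γ.1 β j.1) =
      {f : {j : ℕ // j ∈ (Finset.Ico 1 β.length).filter
            (fun j => β.sizeUpTo j ∉ csub α)} → ℕ |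
        ∀ j, f j = 0 ∨ f j = (j : ℕ)} := by
  set T := (Finset.Ico 1 β.length).filter (fun j => β.sizeUpTo j ∉ csub α) with hT
  have key : ∀ (γ γ' : {γ : Composition n // csub α ⊆ csub γ ∧ csub γ ⊆ csub β}),
      (∀ j : {j : ℕ // j ∈ T}, xi γ.1 β j.1 = xi γ'.1 β j.1) → csub γ.1 ⊆ csub γ'.1 := by
    rintro γ γ' hf x hx
    have hxβ : x ∈ csub β := γ.2.2 hx
    simp only [csub, Finset.mem_image] at hxβ
    obtain ⟨j, hj, rfl⟩ := hxβ
    by_cases hα : β.sizeUpTo j ∈ csub α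
    · exact γ'.2.1 hα
    · have hjT : j ∈ T := by rw [hT, Finset.mem_filter]; exact ⟨hj, hα⟩
      have := hf ⟨j, hjT⟩
      simp only [xi, if_pos hx] at this
      by_cases hc : β.sizeUpTo j ∈ csub γ'.1
      · exact hc
      · rw [if_neg hc] at this
        simp only [Finset.mem_Ico] at hj
        omega
  constructor
  · intro γ γ' hff
    have hf : ∀ j : {j : ℕ // j ∈ T}, xi γ.1 β j.1 = xi γ'.1 β j.1 :=
      fun j => congrFun hff j
    have hf' : ∀ j : {j : ℕ // j ∈ T}, xi γ'.1 β j.1 = xi γ.1 β j.1 :=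
      fun j => (hf j).symm
    exact Subtype.ext (csub_injective (Finset.Subset.antisymm (key γ γ' hf) (key γ' γ hf')))
  · ext f
    simp only [Set.mem_range, Set.mem_setOf_eq]
    constructor
    · rintro ⟨γ, rfl⟩ j
      by_cases hc : β.sizeUpTo j.1 ∈ csub γ.1
      · exact Or.inl (by simp [xi, hc])
      · exact Or.inr (by simp [xi, hc])
    · intro hfv
      set S : Finset ℕ := csub α ∪
        (T.attach.filter (fun j => f j = 0)).image (fun j => β.sizeUpTo j.1) with hS
      have hScsubβ : S ⊆ csub β := by
        intro x hx
        rw [hS, Finset.mem_union] at hx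
        rcases hx with hx | hx
        · exact h hx
        · simp only [Finset.mem_image, Finset.mem_filter, Finset.mem_attach] at hx
          obtain ⟨j, -, rfl⟩ := hx
          exact Finset.mem_image_of_mem _ (Finset.mem_filter.mp j.2).1
      obtain ⟨γ, hγ⟩ := csub_surjective S (hScsubβ.trans (csub_subset_Ico β))
      have hαγ : csub α ⊆ csub γ := by rw [hγ]; exact Finset.subset_union_left
      have hγβ : csub γ ⊆ csub β := by rw [hγ]; exact hScsubβ
      refine ⟨⟨γ, hαγ, hγβ⟩, ?_⟩
      funext j
      obtain ⟨hj12, hjα⟩ := Finset.mem_filter.mp j.2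
      obtain ⟨hj1, hj2⟩ := Finset.mem_Ico.mp hj12
      rcases hfv j with h0 | hj
      · have hmem : β.sizeUpTo j.1 ∈ csub γ := by
          rw [hγ, hS, Finset.mem_union]
          exact Or.inr (Finset.mem_image_of_mem _
            (Finset.mem_filter.mpr ⟨Finset.mem_attach _ _, h0⟩))
        simp [xi, hmem, h0]
      · have hmem : β.sizeUpTo j.1 ∉ csub γ := by
          rw [hγ, hS, Finset.mem_union]
          rintro (hx | hx)
          · exact hjα hx
          · simp only [Finset.mem_image, Finset.mem_filter, Finset.mem_attach,
              true_and] at hx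
            obtain ⟨j', hj'0, hj'e⟩ := hx
            obtain ⟨hj'12, -⟩ := Finset.mem_filter.mp j'.2
            obtain ⟨-, hj'2⟩ := Finset.mem_Ico.mp hj'12
            have heq : (j'.1 : ℕ) = j.1 := sizeUpTo_inj β (le_of_lt hj'2)
              (le_of_lt hj2) hj'e
            have heq2 : j' = j := Subtype.ext heq
            rw [heq2] at hj'0
            omega
        simp [xi, hmem, hj]
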